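/- For the generalized Hermite polynomials H_n defined by H_0 = 1 and H_{n+1}(x) = x H_n(x) - ∂_x H_n(x) in R_{0,m}, the value at x = 0 satisfies H_{2n}(0) = c_n(n) = Π_{l=1}^n (m + 2(n-l)) = m(m+2)···(m+2(n-1)) and H_{2n+1}(0) = 0. -/

import Mathlib

open scoped BigOperators

/-- The Dirac operator `∂_x f = ∑_j e_j ∂_{x_j} f`. -/
noncomputable def diracOp {m : ℕ} {A : Type*} [NormedRing A] [NormedAlgebra ℝ A]
    (e : Fin m → A) (f : (Fin m → ℝ) → A) (x : Fin m → ℝ) : A :=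
  ∑ j : Fin m, e j * fderiv ℝ f x (Pi.single j 1)

/-- Generalized (Clifford-)Hermite polynomials:
`H 0 = 1`, `H (n+1) x = x · H n x - ∂_x (H n) x`, where `x = ∑ x j • e j`. -/
noncomputable def cliffordHermite {m : ℕ} {A : Type*} [NormedRing A] [NormedAlgebra ℝ A]
    (e : Fin m → A) : ℕ → (Fin m → ℝ) → A
  | 0 => fun _ => 1
  | n + 1 => fun x =>
      (∑ j, x j • e j) * cliffordHermite e n x - diracOp e (cliffordHermite e n) x

/-- The constants `c n ν = ∏_{l=1}^ν (m + 2(n-l))`, with `c n 0 = 1`. -/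
noncomputable def hermiteC (m : ℕ) (n ν : ℕ) : ℝ :=
  ∏ l ∈ Finset.Icc 1 ν, ((m : ℝ) + 2 * ((n : ℝ) - (l : ℝ)))

/-!
By induction on `n`, `H_{2n}(x) = P_n^{(m)}(|x|²)` and `H_{2n+1}(x) = P_n^{(m+2)}(|x|²) x` for real
polynomials `P_n^{(μ)} = radialHermite n μ` (in fact `P_n^{(μ)}(r) = 2ⁿ n! L_n^{(μ/2-1)}(r/2)` with
`L` the generalized Laguerre polynomials). This uses `∂_x f(|x|²) = 2 f'(|x|²) x`, `x² = -|x|²` and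
`∂_x x = -m`; the odd step needs `P_n^{(μ)} - 2 P_n^{(μ)}' = P_n^{(μ+2)}`. The recursion
`P_{n+1}^{(μ)} = (μ - X) P_n^{(μ+2)} + 2X P_n^{(μ+2)}'` gives `P_{n+1}^{(μ)}(0) = μ P_n^{(μ+2)}(0)`,
hence `H_{2n}(0) = m(m+2)⋯(m+2n-2)`, while `H_{2n+1}(0)` vanishes because of the factor `x`.
-/

open Finset Polynomial

noncomputable def radialStep (μ : ℝ) (g : ℝ[X]) : ℝ[X] :=
  (C μ - X) * g + 2 * X * derivative g

noncomputable def radialHermite : ℕ → ℝ → ℝ[X]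
  | 0, _ => 1
  | n + 1, μ => radialStep μ (radialHermite n (μ + 2))

lemma radialHermite_succ (n : ℕ) (μ : ℝ) :
    radialHermite (n + 1) μ = radialStep μ (radialHermite n (μ + 2)) :=
  rfl

lemma radialStep_sub_two_derivative (μ : ℝ) (g : ℝ[X]) :
    radialStep μ g - 2 * derivative (radialStep μ g)
      = radialStep (μ + 2) (g - 2 * derivative g) := by
  simp only [radialStep, derivative_mul, derivative_sub, derivative_C, derivative_X,
    derivative_ofNat, map_add, C_ofNat]
  ring

lemma radialStep_eval_zero (μ : ℝ) (g : ℝ[X]) : (radialStep μ g).eval 0 = μ * g.eval 0 := by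
  simp [radialStep]

lemma radialHermite_sub_two_derivative (n : ℕ) (μ : ℝ) :
    radialHermite n μ - 2 * derivative (radialHermite n μ) = radialHermite n (μ + 2) := by
  induction n generalizing μ with
  | zero => simp [radialHermite]
  | succ n ih => rw [radialHermite_succ, radialStep_sub_two_derivative, ih, radialHermite_succ]

lemma radialHermite_eval_zero (n : ℕ) (μ : ℝ) :
    (radialHermite n μ).eval 0 = ∏ l ∈ range n, (μ + 2 * l) := by
  induction n generalizing μ with
  | zero => simp [radialHermite]
  | succ n ih =>
    rw [radialHermite_succ, radialStep_eval_zero, ih, prod_range_succ', mul_comm]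
    congr 1
    · exact prod_congr rfl fun l _ => by push_cast; ring
    · simp

lemma hermiteC_self_eq_prod_range (m n : ℕ) :
    hermiteC m n n = ∏ l ∈ range n, ((m : ℝ) + 2 * l) := by
  rw [hermiteC, ← prod_range_reflect, ← Ico_add_one_right_eq_Icc, prod_Ico_eq_prod_range,
    Nat.add_sub_cancel]
  refine prod_congr rfl fun l hl => ?_
  rw [mem_range] at hl
  rw [Nat.cast_sub (by omega), Nat.cast_sub (by omega)]
  push_cast
  ring

section CliffordRelations

variable {m : ℕ} {A : Type*} [Ring A] {e : Fin m → A}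

lemma anticommutator_eq_ite (he : ∀ j, e j ^ 2 = -1)
    (hanti : ∀ j k, j ≠ k → e j * e k = -(e k * e j)) (i j : Fin m) :
    e i * e j + e j * e i = if i = j then -2 else 0 := by
  split_ifs with hij
  · rw [hij, ← sq, he]; norm_num
  · rw [hanti i j hij, neg_add_cancel]

lemma sum_smul_mul_self [Algebra ℝ A] (he : ∀ j, e j ^ 2 = -1)
    (hanti : ∀ j k, j ≠ k → e j * e k = -(e k * e j)) (x : Fin m → ℝ) :
    (∑ i, x i • e i) * (∑ i, x i • e i) = -(x ⬝ᵥ x) • (1 : A) := by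
  -- `S` is symmetric in `i, j`, so `2 S` is a sum of anticommutators.
  set S := (∑ i, x i • e i) * (∑ i, x i • e i)
  have hS : S = ∑ i, ∑ j, (x i * x j) • (e i * e j) := by
    simp only [S, sum_mul_sum, smul_mul_smul_comm]
  have hS' : S = ∑ i, ∑ j, (x i * x j) • (e j * e i) := by
    rw [hS, sum_comm]
    exact sum_congr rfl fun i _ => sum_congr rfl fun j _ => by rw [mul_comm (x j)]
  have h2S : (2 : ℝ) • S = (2 : ℝ) • (-(x ⬝ᵥ x) • (1 : A)) := by
    rw [two_smul]
    nth_rewrite 1 [hS]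
    rw [hS']
    simp only [← sum_add_distrib, ← smul_add, anticommutator_eq_ite he hanti, smul_ite,
      smul_zero, sum_ite_eq, mem_univ, if_true, dotProduct, ← sum_smul, smul_smul]
    rw [show (-2 : A) = (-2 : ℝ) • (1 : A) by
      rw [Algebra.smul_def, mul_one, map_neg, map_ofNat], smul_smul]
    ring_nf
  exact smul_right_injective A two_ne_zero h2S

lemma sum_mul_self_eq_neg_card (he : ∀ j, e j ^ 2 = -1) : ∑ j, e j * e j = -(m : A) := by
  simp [← sq, he]

end CliffordRelations

section Dirac

variable {m : ℕ} {A : Type*} [NormedRing A] [NormedAlgebra ℝ A] (e : Fin m → A)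

noncomputable def cliffordVector : (Fin m → ℝ) →L[ℝ] A :=
  ∑ i, (ContinuousLinearMap.proj i).smulRight (e i)

lemma cliffordVector_apply (x : Fin m → ℝ) : cliffordVector e x = ∑ i, x i • e i := by
  simp [cliffordVector]

lemma cliffordVector_single (j : Fin m) : cliffordVector e (Pi.single j 1) = e j := by
  simp [cliffordVector_apply, Pi.single_apply, ite_smul]

lemma diracOp_const (c : A) (x : Fin m → ℝ) : diracOp e (fun _ => c) x = 0 := by
  simp [diracOp]

lemma diracOp_cliffordVector (x : Fin m → ℝ) : diracOp e (cliffordVector e) x = ∑ j, e j * e j := by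
  simp only [diracOp, ContinuousLinearMap.fderiv, cliffordVector_single]

lemma diracOp_smul {f : (Fin m → ℝ) → ℝ} {g : (Fin m → ℝ) → A} {x : Fin m → ℝ}
    (hf : DifferentiableAt ℝ f x) (hg : DifferentiableAt ℝ g x) :
    diracOp e (fun y => f y • g y) x
      = (∑ j, fderiv ℝ f x (Pi.single j 1) • e j) * g x + f x • diracOp e g x := by
  simp only [diracOp, fderiv_fun_smul hf hg, add_apply, smul_apply,
    ContinuousLinearMap.smulRight_apply, mul_add, sum_add_distrib, sum_mul, smul_sum, mul_smul_comm,
    smul_mul_assoc, add_comm]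

lemma hasFDerivAt_dotProduct_self (x : Fin m → ℝ) :
    HasFDerivAt (fun y : Fin m → ℝ => y ⬝ᵥ y)
      (∑ i, (2 * x i) • (ContinuousLinearMap.proj i : (Fin m → ℝ) →L[ℝ] ℝ)) x :=
  HasFDerivAt.fun_sum fun i _ => by
    simpa only [two_mul, add_smul] using (hasFDerivAt_apply i x).fun_mul (hasFDerivAt_apply i x)

lemma hasFDerivAt_eval_dotProduct_self (p : ℝ[X]) (x : Fin m → ℝ) :
    HasFDerivAt (fun y => p.eval (y ⬝ᵥ y))
      ((derivative p).eval (x ⬝ᵥ x) •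
        ∑ i, (2 * x i) • (ContinuousLinearMap.proj i : (Fin m → ℝ) →L[ℝ] ℝ)) x :=
  (p.hasDerivAt _).comp_hasFDerivAt x (hasFDerivAt_dotProduct_self x)

lemma fderiv_eval_dotProduct_self_single (p : ℝ[X]) (x : Fin m → ℝ) (j : Fin m) :
    fderiv ℝ (fun y => p.eval (y ⬝ᵥ y)) x (Pi.single j 1)
      = 2 * x j * (derivative p).eval (x ⬝ᵥ x) := by
  simp only [(hasFDerivAt_eval_dotProduct_self p x).fderiv, smul_apply, _root_.sum_apply,
    ContinuousLinearMap.proj_apply, Pi.single_apply, smul_eq_mul, mul_ite, mul_one, mul_zero,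
    sum_ite_eq', mem_univ, if_true]
  ring

lemma diracOp_eval_dotProduct_self_smul (p : ℝ[X]) {g : (Fin m → ℝ) → A} {x : Fin m → ℝ}
    (hg : DifferentiableAt ℝ g x) :
    diracOp e (fun y => p.eval (y ⬝ᵥ y) • g y) x
      = (2 * (derivative p).eval (x ⬝ᵥ x)) • (cliffordVector e x * g x)
        + p.eval (x ⬝ᵥ x) • diracOp e g x := by
  rw [diracOp_smul e (hasFDerivAt_eval_dotProduct_self p x).differentiableAt hg]
  simp only [fderiv_eval_dotProduct_self_single, cliffordVector_apply, smul_sum, sum_mul,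
    smul_smul, smul_mul_assoc]
  congr 1
  refine sum_congr rfl fun j _ => ?_
  ring_nf

lemma cliffordHermite_succ_apply (k : ℕ) (x : Fin m → ℝ) :
    cliffordHermite e (k + 1) x
      = cliffordVector e x * cliffordHermite e k x - diracOp e (cliffordHermite e k) x := by
  rw [cliffordVector_apply]
  rfl

lemma cliffordHermite_succ_of_eq_eval_smul_one {k : ℕ} {p : ℝ[X]}
    (h : cliffordHermite e k = fun x => p.eval (x ⬝ᵥ x) • (1 : A)) :
    cliffordHermite e (k + 1)
      = fun x => (p - 2 * derivative p).eval (x ⬝ᵥ x) • cliffordVector e x := by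
  funext x
  rw [cliffordHermite_succ_apply, h,
    diracOp_eval_dotProduct_self_smul e p (differentiableAt_const (1 : A)), diracOp_const]
  simp only [mul_smul_comm, mul_one, smul_zero, add_zero, eval_sub, eval_mul, eval_ofNat]
  module

lemma cliffordHermite_succ_of_eq_eval_smul_cliffordVector (he : ∀ j, e j ^ 2 = -1)
    (hanti : ∀ j k, j ≠ k → e j * e k = -(e k * e j)) {k : ℕ} {q : ℝ[X]}
    (h : cliffordHermite e k = fun x => q.eval (x ⬝ᵥ x) • cliffordVector e x) :
    cliffordHermite e (k + 1)
      = fun x => (radialStep m q).eval (x ⬝ᵥ x) • (1 : A) := by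
  funext x
  rw [cliffordHermite_succ_apply, h,
    diracOp_eval_dotProduct_self_smul e q (cliffordVector e).differentiableAt,
    diracOp_cliffordVector, sum_mul_self_eq_neg_card he, mul_smul_comm, cliffordVector_apply,
    sum_smul_mul_self he hanti, ← map_natCast (algebraMap ℝ A), Algebra.algebraMap_eq_smul_one]
  simp only [radialStep, eval_add, eval_mul, eval_sub, eval_C, eval_X, eval_ofNat]
  module

theorem cliffordHermite_eq_radialHermite (he : ∀ j, e j ^ 2 = -1)
    (hanti : ∀ j k, j ≠ k → e j * e k = -(e k * e j)) (n : ℕ) :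
    cliffordHermite e (2 * n) = (fun x => (radialHermite n m).eval (x ⬝ᵥ x) • (1 : A)) ∧
      cliffordHermite e (2 * n + 1)
        = fun x => (radialHermite n (m + 2)).eval (x ⬝ᵥ x) • cliffordVector e x := by
  have odd_of_even {n : ℕ}
      (h : cliffordHermite e (2 * n) = fun x => (radialHermite n m).eval (x ⬝ᵥ x) • (1 : A)) :
      cliffordHermite e (2 * n + 1)
        = fun x => (radialHermite n (m + 2)).eval (x ⬝ᵥ x) • cliffordVector e x := by
    rw [cliffordHermite_succ_of_eq_eval_smul_one e h, radialHermite_sub_two_derivative]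
  induction n with
  | zero =>
    have h0 : cliffordHermite e (2 * 0) = fun x => (radialHermite 0 m).eval (x ⬝ᵥ x) • (1 : A) := by
      funext x
      simp [radialHermite, cliffordHermite]
    exact ⟨h0, odd_of_even h0⟩
  | succ n ih =>
    have heven : cliffordHermite e (2 * (n + 1))
        = fun x => (radialHermite (n + 1) m).eval (x ⬝ᵥ x) • (1 : A) :=
      cliffordHermite_succ_of_eq_eval_smul_cliffordVector e he hanti ih.2
    exact ⟨heven, odd_of_even heven⟩

end Dirac

/-- values of the generalized Hermite polynomials at the origin:
`H_{2n}(0) = c_n(n) = m(m+2)⋯(m+2(n-1))` (as a scalar) and `H_{2n+1}(0) = 0`. -/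
theorem cliffordHermite_at_zero {m : ℕ} {A : Type*} [NormedRing A] [NormedAlgebra ℝ A]
    (e : Fin m → A)
    (he : ∀ j, e j ^ 2 = -1)
    (hanti : ∀ j k, j ≠ k → e j * e k = -(e k * e j))
    (n : ℕ) :
    cliffordHermite e (2 * n) 0 = (hermiteC m n n) • (1 : A) ∧
    hermiteC m n n = ∏ l ∈ Finset.range n, ((m : ℝ) + 2 * l) ∧
    cliffordHermite e (2 * n + 1) 0 = 0 := by
  obtain ⟨heven, hodd⟩ := cliffordHermite_eq_radialHermite e he hanti n
  refine ⟨?_, hermiteC_self_eq_prod_range m n, ?_⟩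
  · rw [heven, hermiteC_self_eq_prod_range, ← radialHermite_eval_zero]
    simp
  · rw [hodd]
    simp
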